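/- Transposition invariance of greedy MIS: let G = (V,E) be a finite simple graph, σ a linear order on V, and let u, v be two vertices that are consecutive in σ (v is the immediate σ-successor of u) and are not adjacent in G. Let σ' be the linear order obtained from σ by exchanging the positions of u and v. Then Greedy(G,σ') = Greedy(G,σ). -/

import Mathlib

/-- The greedy (lexicographically first) independent set of a finite simple graph `G`
with respect to a linear order `σ` on its vertices: a vertex `v` is added iff no
neighbor of `v` preceding `v` in `σ` has already been added. -/
noncomputable def greedy {V : Type*} [Finite V] (σ : LinearOrder V) (G : SimpleGraph V) :
    Set V :=
  letI := σ
  fun v => WellFounded.fix (Finite.wellFounded_of_trans_of_irrefl ((· < ·) : V → V → Prop))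
    (fun v ih => ∀ u, (h : u < v) → G.Adj u v → ¬ ih u h) v

/-- The restriction of a linear order `σ` on `V` to a subset `U ⊆ V`. -/
noncomputable def restrictOrder {V : Type*} (σ : LinearOrder V) (U : Set V) :
    LinearOrder ↥U :=
  letI := σ
  inferInstance

/-- The closed neighborhood `N(S)` of a vertex set `S`: the union of `S` with the set of
all vertices adjacent in `G` to some vertex of `S`. -/
def closedN {V : Type*} (G : SimpleGraph V) (S : Set V) : Set V :=
  S ∪ {v | ∃ s ∈ S, G.Adj s v}

/-!
`Greedy(G, σ)` depends only on the orientation that `σ` induces on the edges of `G`: by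
well-founded induction along `σ`, whether `x` is taken is decided by the earlier neighbours of `x`
alone. Exchanging two consecutive vertices `u ⋖ v` reverses the relative order of that single pair,
which is not an edge, so the orientation and hence the greedy set are unchanged.
-/

theorem mem_greedy_iff {V : Type*} [Finite V] (σ : LinearOrder V) (G : SimpleGraph V) (x : V) :
    x ∈ greedy σ G ↔ ∀ y, σ.lt y x → G.Adj y x → y ∉ greedy σ G :=
  Iff.of_eq (WellFounded.fix_eq (Finite.wellFounded_of_trans_of_irrefl _) _ x)

theorem greedy_eq_of_adj_lt_iff {V : Type*} [Finite V] {σ σ' : LinearOrder V}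
    {G : SimpleGraph V} (h : ∀ x y, G.Adj x y → (σ'.lt x y ↔ σ.lt x y)) :
    greedy σ' G = greedy σ G := by
  let := σ
  ext x
  induction x using WellFoundedLT.induction with
  | _ x ih =>
    rw [mem_greedy_iff σ', mem_greedy_iff σ]
    refine forall_congr' fun y => ?_
    by_cases hyx : G.Adj y x
    · rw [h y x hyx]
      exact imp_congr_right fun hlt => by rw [ih y hlt]
    · simp only [hyx, false_implies, implies_true]

section CovBy

variable {α : Type*} [LinearOrder α] {a b c : α}

theorem CovBy.lt_left_iff_lt_right (hab : a ⋖ b) (hc : c ≠ a) : c < a ↔ c < b :=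
  ⟨fun h => h.trans hab.lt, fun h => (hab.le_of_lt h).lt_of_ne hc⟩

theorem CovBy.left_lt_iff_right_lt (hab : a ⋖ b) (hc : c ≠ b) : a < c ↔ b < c :=
  ⟨fun h => (hab.ge_of_gt h).lt_of_ne' hc, fun h => hab.lt.trans h⟩

theorem CovBy.swap_lt_swap_iff [DecidableEq α] (hab : a ⋖ b) {x y : α}
    (hxy : s(x, y) ≠ s(a, b)) : Equiv.swap a b x < Equiv.swap a b y ↔ x < y := by
  rw [Ne, Sym2.eq_iff] at hxy
  have hlt := @hab.lt_left_iff_lt_right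
  have hgt := @hab.left_lt_iff_right_lt
  have hab' := hab.lt
  rw [Equiv.swap_apply_def, Equiv.swap_apply_def]
  split_ifs <;> grind

end CovBy

/-- Transposition invariance of greedy MIS: if `v` is the immediate `σ`-successor of `u`,
`u` and `v` are not adjacent in `G`, and `σ'` is obtained from `σ` by exchanging the
positions of `u` and `v`, then `Greedy(G,σ') = Greedy(G,σ)`. -/
theorem greedy_transpositionInvariant {V : Type*} [Finite V] (σ σ' : LinearOrder V)
    (G : SimpleGraph V) (u v : V)
    (huv : σ.lt u v) (hsucc : ∀ w : V, σ.lt u w → σ.le v w)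
    (hnadj : ¬ G.Adj u v)
    (hσ' : ∀ x y : V, σ'.lt x y ↔ σ.lt (Equiv.swap u v x) (Equiv.swap u v y)) :
    greedy σ' G = greedy σ G := by
  let := σ
  have hcov : u ⋖ v := ⟨huv, fun w huw hwv => (hsucc w huw).not_gt hwv⟩
  refine greedy_eq_of_adj_lt_iff fun x y hxy => (hσ' x y).trans ?_
  have hxy_ne_uv : s(x, y) ≠ s(u, v) := fun h => hnadj (h ▸ hxy : s(u, v) ∈ G.edgeSet)
  -- `hσ'` was elaborated with the `DecidableEq` instance coming from `σ'`
  convert hcov.swap_lt_swap_iff hxy_ne_uv using 3 <;> congr!
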